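/- Let R be a commutative ring of characteristic 2 (i.e. 1 + 1 = 0 in R), let a and τ be units of R, and let r', c ∈ R. Then the following identity of 2×2 matrices over R holds: [[a², 0], [0, a⁻²]] · [[r', 1], [1, 0]] · [[a², 0], [τ⁻¹c², a⁻²]] · [[0, 1], [1, r']] · [[1, τ⁻¹a²c²], [0, 1]] = [[1, r'(1 + a⁴)], [0, 1]]. In particular, if 1 + a⁴ is also a unit of R, then for every r ∈ R the unipotent matrix [[1, r], [0, 1]] admits such a factorization with r' = r(1 + a⁴)⁻¹. -/
import Mathlib


/-- Characteristic-2 matrix identity from Lemma 4.3, together with the resulting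
factorization of an arbitrary upper unipotent matrix when `1 + a⁴` is a unit. -/
theorem sl2_identity_char_two {R : Type*} [CommRing R] (hchar : (1 : R) + 1 = 0)
    (a τ : Rˣ) :
    (∀ r' c : R,
      (!![(a : R) ^ 2, 0; 0, ((a⁻¹ : Rˣ) : R) ^ 2] : Matrix (Fin 2) (Fin 2) R) *
          !![r', 1; 1, 0] *
          !![(a : R) ^ 2, 0; ((τ⁻¹ : Rˣ) : R) * c ^ 2, ((a⁻¹ : Rˣ) : R) ^ 2] *
          !![0, 1; 1, r'] *
          !![1, ((τ⁻¹ : Rˣ) : R) * (a : R) ^ 2 * c ^ 2; 0, 1] =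
        !![1, r' * (1 + (a : R) ^ 4); 0, 1]) ∧
    (∀ u : Rˣ, (u : R) = 1 + (a : R) ^ 4 → ∀ r c : R,
      (!![(a : R) ^ 2, 0; 0, ((a⁻¹ : Rˣ) : R) ^ 2] : Matrix (Fin 2) (Fin 2) R) *
          !![r * ((u⁻¹ : Rˣ) : R), 1; 1, 0] *
          !![(a : R) ^ 2, 0; ((τ⁻¹ : Rˣ) : R) * c ^ 2, ((a⁻¹ : Rˣ) : R) ^ 2] *
          !![0, 1; 1, r * ((u⁻¹ : Rˣ) : R)] *
          !![1, ((τ⁻¹ : Rˣ) : R) * (a : R) ^ 2 * c ^ 2; 0, 1] =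
        !![1, r; 0, 1]) := by
  have ha : (a : R) * ((a⁻¹ : Rˣ) : R) = 1 := by
    rw [← Units.val_mul, mul_inv_cancel, Units.val_one]
  have key : ∀ r' c : R,
      (!![(a : R) ^ 2, 0; 0, ((a⁻¹ : Rˣ) : R) ^ 2] : Matrix (Fin 2) (Fin 2) R) *
          !![r', 1; 1, 0] *
          !![(a : R) ^ 2, 0; ((τ⁻¹ : Rˣ) : R) * c ^ 2, ((a⁻¹ : Rˣ) : R) ^ 2] *
          !![0, 1; 1, r'] *
          !![1, ((τ⁻¹ : Rˣ) : R) * (a : R) ^ 2 * c ^ 2; 0, 1] =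
        !![1, r' * (1 + (a : R) ^ 4); 0, 1] := by
    intro r' c
    set b : R := ((a⁻¹ : Rˣ) : R) with hb
    set t : R := ((τ⁻¹ : Rˣ) : R) with ht
    ext i j
    fin_cases i <;> fin_cases j <;>
      simp [Matrix.mul_apply, Fin.sum_univ_succ]
    · linear_combination ((a : R) * b + 1) * ha
    · linear_combination ((a : R) ^ 2 * t * c ^ 2 * ((a : R) * b + 1) +
        r' * ((a : R) * b + 1)) * ha + (a : R) ^ 2 * t * c ^ 2 * hchar
    · linear_combination ((a : R) * b + 1) * ha
  refine ⟨key, ?_⟩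
  intro u hu r c
  have h := key (r * ((u⁻¹ : Rˣ) : R)) c
  rw [h, ← hu]
  congr 1
  rw [mul_assoc, ← Units.val_mul, inv_mul_cancel, Units.val_one, mul_one]
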